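/- Under Assumption *, let Λ be a spectrum of the infinite convolution μ with 0 ∈ Λ. Then Λ ⊆ ℚ. -/

import Mathlib

open MeasureTheory Filter Topology Complex Polynomial

/-- The exponential function `e_l(x) = e^{-2πi l x}`. -/
noncomputable def expFun (l x : ℝ) : ℂ :=
  Complex.exp (((-2 * Real.pi * l * x : ℝ) : ℂ) * Complex.I)

/-- The Fourier transform `μ̂(ξ) = ∫ e^{-2πiξx} dμ(x)` of a measure on `ℝ`. -/
noncomputable def ft (μ : Measure ℝ) (ξ : ℝ) : ℂ := ∫ x, expFun ξ x ∂μ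

/-- `Λ` is an orthogonal (orthonormal) set for `μ`: the exponentials `e_λ`, `λ ∈ Λ`, form an
orthonormal family in `L²(μ)`. -/
def IsOrthoSet (μ : Measure ℝ) (Λ : Set ℝ) : Prop :=
  ∀ l₁ ∈ Λ, ∀ l₂ ∈ Λ,
    (∫ x, (starRingEnd ℂ) (expFun l₁ x) * expFun l₂ x ∂μ) = if l₁ = l₂ then 1 else 0

/-- `(μ, Λ)` is a spectral pair: the exponentials `{e_λ : λ ∈ Λ}` form an orthonormal family
which is maximal (total) in `L²(μ)`, i.e. an orthonormal basis of `L²(μ)`. -/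
def IsSpectralPair (μ : Measure ℝ) (Λ : Set ℝ) : Prop :=
  IsOrthoSet μ Λ ∧
  ∀ f : ℝ → ℂ, MemLp f 2 μ →
    (∀ l ∈ Λ, (∫ x, (starRingEnd ℂ) (expFun l x) * f x ∂μ) = 0) → f =ᵐ[μ] 0

/-- `μ` is a spectral measure: some countable `Λ ⊆ ℝ` is a spectrum of `μ`. -/
def IsSpectralMeasure (μ : Measure ℝ) : Prop :=
  ∃ Λ : Set ℝ, Λ.Countable ∧ IsSpectralPair μ Λ

/-- The uniform probability measure `δ_A` on a finite set `A ⊆ ℝ`. -/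
noncomputable def uniformD (A : Finset ℝ) : Measure ℝ :=
  (A.card : ENNReal)⁻¹ • ∑ a ∈ A, Measure.dirac a

/-- The measure `δ_{c⁻¹ B}` for a finite set `B ⊆ ℤ` and a scaling factor `c`. -/
noncomputable def scaledB (B : Finset ℤ) (c : ℝ) : Measure ℝ :=
  uniformD (B.image fun b : ℤ => (b : ℝ) / c)

/-- The finite convolutions `μ_k = δ_{N₁⁻¹B₁} ∗ δ_{(N₁N₂)⁻¹B₂} ∗ ⋯ ∗ δ_{(N₁⋯N_k)⁻¹B_k}`
(the sequences are indexed starting from `k = 1`; `μ_0 = δ_0`). -/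
noncomputable def partialConv (N : ℕ → ℕ) (B : ℕ → Finset ℤ) : ℕ → Measure ℝ
  | 0 => Measure.dirac 0
  | k + 1 =>
      MeasureTheory.Measure.conv (partialConv N B k)
        (scaledB (B (k + 1)) (∏ i ∈ Finset.Icc 1 (k + 1), (N i : ℝ)))

/-- `μ` is the infinite convolution of `{(N_k, B_k)}_{k=1}^∞`: it is a Borel probability
measure and the finite convolutions `μ_k` converge weakly to `μ`. -/
def IsInfiniteConv (N : ℕ → ℕ) (B : ℕ → Finset ℤ) (μ : Measure ℝ) : Prop :=
  IsProbabilityMeasure μ ∧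
    ∀ f : BoundedContinuousFunction ℝ ℝ,
      Tendsto (fun k => ∫ x, f x ∂(partialConv N B k)) atTop (𝓝 (∫ x, f x ∂μ))

/-- `ν` is the tail infinite convolution `ν_{>k} = δ_{N_{k+1}⁻¹B_{k+1}} ∗ ⋯`. -/
def IsNuGt (N : ℕ → ℕ) (B : ℕ → Finset ℤ) (k : ℕ) (ν : Measure ℝ) : Prop :=
  IsInfiniteConv (fun j => N (k + j)) (fun j => B (k + j)) ν

/-- A family of measures is tight. -/
def IsTightFamily {ι : Type*} (Φ : ι → Measure ℝ) : Prop :=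
  ∀ ε : ENNReal, 0 < ε → ∃ K : Set ℝ, IsCompact K ∧ ∀ i, 1 - ε < Φ i K

/-- `B` is a complete residue system modulo `M`: each residue class modulo `M` contains
exactly one element of `B`. -/
def IsCRS (B : Finset ℤ) (M : ℕ) : Prop :=
  ∀ r : ZMod M, ∃! b : ℤ, b ∈ B ∧ ((b : ZMod M) = r)

/-- `∑_{b ∈ B} x^{b - b⁎}` where `b⁎ = min B`, i.e. `x^{-b⁎} ∑_{b ∈ B} x^b`. -/
noncomputable def numerPoly (B : Finset ℤ) : Polynomial ℤ :=
  ∑ b ∈ B, Polynomial.X ^ (b - (B.min.untopD 0)).toNat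

/-- `∑_{k=0}^{n-1} x^k`. -/
noncomputable def geomPoly (n : ℕ) : Polynomial ℤ :=
  ∑ k ∈ Finset.range n, Polynomial.X ^ k

/-- The character polynomial `f_B(x) = (∑_{b∈B} x^b)/(x^{b⁎} ∑_{k=0}^{#B-1} x^k)`,
obtained by dividing by the monic polynomial `∑_{k=0}^{#B-1} x^k`. -/
noncomputable def charPoly (B : Finset ℤ) : Polynomial ℤ :=
  numerPoly B /ₘ geomPoly B.card

/-- `B` (a complete residue system modulo `M`) satisfies the uniform discrete zero
condition: `Z(f_B ∘ e^{-2πix}) ⊆ {j/M : j ∈ ℤ ∖ Mℤ}`. -/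
def SatisfiesUDZ (B : Finset ℤ) (M : ℕ) : Prop :=
  {x : ℝ | Polynomial.aeval (expFun x 1) (charPoly B) = 0} ⊆
    {x : ℝ | ∃ j : ℤ, ¬ ((M : ℤ) ∣ j) ∧ x = (j : ℝ) / M}

/-- `M_B(ξ) = (1/#B) ∑_{b∈B} e^{-2πibξ}`, the Fourier transform of `δ_B`. -/
noncomputable def MB (B : Finset ℤ) (ξ : ℝ) : ℂ :=
  (B.card : ℂ)⁻¹ * ∑ b ∈ B, expFun (b : ℝ) ξ

/-- `Q_{μ,Λ}(ξ) = ∑_{λ ∈ Λ} |μ̂(ξ+λ)|²`. -/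
noncomputable def Qf (μ : Measure ℝ) (Λ : Set ℝ) (ξ : ℝ) : ℝ :=
  ∑' l : Λ, ‖ft μ (ξ + (l : ℝ))‖ ^ 2

/-!
If `λ ∈ Λ` is nonzero, orthogonality of `e_λ` to `e_0` forces `μ̂(λ) = 0`. For every `k`,
`μ̂(λ) = ∏_{i ≤ k} M_{B_i}(λ / N₁⋯N_i) · ν̂_{>k}(λ / N₁⋯N_k)`, and tightness of the tails keeps
`ν̂_{>k}` away from zero on a fixed neighbourhood of the origin, uniformly in `k`. Taking `k` so
large that `λ / N₁⋯N_k` lies in it, some `M_{B_i}(λ / N₁⋯N_i)` vanishes. As `B_i` is a complete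
residue system modulo `M_i`, its numerator polynomial is `(1 + x + ⋯ + x^{M_i - 1}) f_{B_i}(x)`,
so by the uniform discrete zero condition `λ / N₁⋯N_i ∈ M_i⁻¹ ℤ`, whence `λ ∈ ℚ`.
-/

open Finset

lemma norm_expFun (l x : ℝ) : ‖expFun l x‖ = 1 := by
  simp [expFun, Complex.norm_exp]

lemma expFun_ne_zero (l x : ℝ) : expFun l x ≠ 0 := Complex.exp_ne_zero _

lemma integrable_expFun (μ : Measure ℝ) [IsFiniteMeasure μ] (l : ℝ) :
    Integrable (expFun l) μ :=
  (integrable_const (1 : ℝ)).mono' (by unfold expFun; fun_prop) (.of_forall fun x => by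
    simp [norm_expFun])

lemma expFun_zero_left (x : ℝ) : expFun 0 x = 1 := by simp [expFun]

lemma expFun_comm_div (ξ x c : ℝ) : expFun ξ (x / c) = expFun x (ξ / c) := by
  unfold expFun; congr 3; ring

lemma expFun_intCast_left (b : ℤ) (η : ℝ) : expFun b η = expFun η 1 ^ b := by
  rw [expFun, expFun, ← Complex.exp_int_mul]; congr 1; push_cast; ring

lemma ft_eq_charFun (μ : Measure ℝ) (ξ : ℝ) : ft μ ξ = charFun μ (-2 * Real.pi * ξ) := by
  simp only [ft, expFun, charFun_apply_real]
  congr 1; ext x; congr 1; push_cast; ring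

lemma ft_conv (μ ν : Measure ℝ) [IsFiniteMeasure μ] [IsFiniteMeasure ν] (ξ : ℝ) :
    ft (μ ∗ ν) ξ = ft μ ξ * ft ν ξ := by
  simp only [ft_eq_charFun, charFun_conv]

lemma ft_uniformD (A : Finset ℝ) (ξ : ℝ) :
    ft (uniformD A) ξ = (#A : ℂ)⁻¹ * ∑ a ∈ A, expFun ξ a := by
  simp [ft, uniformD, integral_smul_measure,
    integral_finsetSum_measure fun a _ => integrable_expFun (Measure.dirac a) ξ, Complex.real_smul]

lemma ft_scaledB (B : Finset ℤ) {c : ℝ} (hc : c ≠ 0) (ξ : ℝ) :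
    ft (scaledB B c) ξ = MB B (ξ / c) := by
  have hinj : Set.InjOn (fun b : ℤ => (b : ℝ) / c) B := fun a _ b _ h => by
    simpa [div_left_inj' hc] using h
  simp only [scaledB, MB, ft_uniformD, card_image_of_injOn hinj, sum_image hinj, expFun_comm_div]

lemma isProbabilityMeasure_uniformD {A : Finset ℝ} (hA : A.Nonempty) :
    IsProbabilityMeasure (uniformD A) := by
  constructor
  simp [uniformD, ENNReal.inv_mul_cancel, hA.ne_empty]

lemma isProbabilityMeasure_scaledB {B : Finset ℤ} (hB : B.Nonempty) (c : ℝ) :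
    IsProbabilityMeasure (scaledB B c) :=
  isProbabilityMeasure_uniformD (hB.image _)

lemma isProbabilityMeasure_partialConv (N : ℕ → ℕ) {B : ℕ → Finset ℤ}
    (hB : ∀ i ≥ 1, (B i).Nonempty) : ∀ k, IsProbabilityMeasure (partialConv N B k)
  | 0 => by rw [partialConv]; infer_instance
  | k + 1 => by
      have := isProbabilityMeasure_partialConv N hB k
      have := isProbabilityMeasure_scaledB (hB (k + 1) k.succ_pos)
      rw [partialConv]; infer_instance

section InfiniteConvolution

variable {N : ℕ → ℕ} {B : ℕ → Finset ℤ} {μ : Measure ℝ}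

lemma ft_partialConv (hB : ∀ i ≥ 1, (B i).Nonempty) (hN : ∀ i ≥ 1, N i ≠ 0) (ξ : ℝ) :
    ∀ k, ft (partialConv N B k) ξ =
      ∏ i ∈ Icc 1 k, MB (B i) (ξ / ∏ j ∈ Icc 1 i, (N j : ℝ))
  | 0 => by simp [partialConv, ft, expFun]
  | k + 1 => by
      have := isProbabilityMeasure_partialConv N hB k
      have := isProbabilityMeasure_scaledB (hB (k + 1) k.succ_pos)
      have hP : ∏ j ∈ Icc 1 (k + 1), (N j : ℝ) ≠ 0 :=
        prod_ne_zero_iff.2 fun j hj => Nat.cast_ne_zero.2 (hN j (mem_Icc.1 hj).1)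
      rw [partialConv, ft_conv, ft_partialConv hB hN ξ k, ft_scaledB _ hP]
      exact (prod_Icc_succ_top k.succ_pos _).symm

lemma IsInfiniteConv.tendsto_ft (hμ : IsInfiniteConv N B μ) (hB : ∀ i ≥ 1, (B i).Nonempty)
    (ξ : ℝ) : Tendsto (fun k => ft (partialConv N B k) ξ) atTop (𝓝 (ft μ ξ)) := by
  let μs (k : ℕ) : ProbabilityMeasure ℝ :=
    ⟨partialConv N B k, isProbabilityMeasure_partialConv N hB k⟩
  have hlim : Tendsto μs atTop (𝓝 ⟨μ, hμ.1⟩) :=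
    ProbabilityMeasure.tendsto_iff_forall_integral_tendsto.2 hμ.2
  simp only [ft_eq_charFun]
  exact ProbabilityMeasure.tendsto_iff_tendsto_charFun.1 hlim _

lemma prod_Icc_one_add {α : Type*} [CommMonoid α] (f : ℕ → α) (k : ℕ) :
    ∀ m, ∏ i ∈ Icc 1 (k + m), f i = (∏ i ∈ Icc 1 k, f i) * ∏ j ∈ Icc 1 m, f (k + j)
  | 0 => by simp
  | m + 1 => by
      rw [← add_assoc, prod_Icc_succ_top (by omega), prod_Icc_one_add f k m,
        prod_Icc_succ_top (by omega), mul_assoc, add_assoc]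

lemma ft_eq_prod_MB_mul_ft_of_isNuGt (hB : ∀ i ≥ 1, (B i).Nonempty) (hN : ∀ i ≥ 1, N i ≠ 0)
    (hμ : IsInfiniteConv N B μ) {k : ℕ} {ν : Measure ℝ} (hν : IsNuGt N B k ν) (ξ : ℝ) :
    ft μ ξ = (∏ i ∈ Icc 1 k, MB (B i) (ξ / ∏ j ∈ Icc 1 i, (N j : ℝ))) *
      ft ν (ξ / ∏ j ∈ Icc 1 k, (N j : ℝ)) := by
  set g : ℕ → ℂ := fun i => MB (B i) (ξ / ∏ j ∈ Icc 1 i, (N j : ℝ))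
  have hfull : Tendsto (fun m => ∏ i ∈ Icc 1 (k + m), g i) atTop (𝓝 (ft μ ξ)) := by
    have := (hμ.tendsto_ft hB ξ).comp ((tendsto_add_atTop_nat k).congr fun m => add_comm m k)
    simpa only [Function.comp_def, ft_partialConv hB hN] using this
  have htail : Tendsto (fun m => ∏ j ∈ Icc 1 m, g (k + j)) atTop
      (𝓝 (ft ν (ξ / ∏ j ∈ Icc 1 k, (N j : ℝ)))) := by
    convert hν.tendsto_ft (fun i hi => hB (k + i) (by omega)) _ using 2 with m
    rw [ft_partialConv (fun i hi => hB (k + i) (by omega)) (fun i hi => hN (k + i) (by omega))]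
    refine prod_congr rfl fun j _ => ?_
    simp only [g, prod_Icc_one_add (fun i => (N i : ℝ)), div_div]
  simp only [prod_Icc_one_add g k] at hfull
  exact tendsto_nhds_unique hfull (htail.const_mul _)

end InfiniteConvolution

section Tightness

lemma norm_expFun_sub_one_le (t x : ℝ) : ‖expFun t x - 1‖ ≤ 2 * Real.pi * |t| * |x| := by
  have h := Real.norm_exp_I_mul_ofReal_sub_one_le (x := -2 * Real.pi * t * x)
  rw [mul_comm] at h
  simpa [expFun, abs_mul, abs_of_pos Real.pi_pos] using h

lemma norm_expFun_sub_one_le_two (t x : ℝ) : ‖expFun t x - 1‖ ≤ 2 :=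
  (norm_sub_le _ _).trans (by simp [norm_expFun]; norm_num)

lemma norm_ft_sub_one_le (μ : Measure ℝ) [IsProbabilityMeasure μ] {R : ℝ} (hR : 0 ≤ R) (t : ℝ) :
    ‖ft μ t - 1‖ ≤ 2 * Real.pi * |t| * R + 2 * μ.real (Metric.closedBall 0 R)ᶜ := by
  have hS : MeasurableSet (Metric.closedBall (0 : ℝ) R)ᶜ := measurableSet_closedBall.compl
  have hbound (x : ℝ) : ‖expFun t x - 1‖ ≤
      2 * Real.pi * |t| * R + 2 * (Metric.closedBall 0 R)ᶜ.indicator 1 x := by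
    by_cases hx : x ∈ Metric.closedBall (0 : ℝ) R
    · calc ‖expFun t x - 1‖ ≤ 2 * Real.pi * |t| * |x| := norm_expFun_sub_one_le t x
        _ ≤ 2 * Real.pi * |t| * R := by gcongr; simpa using hx
        _ ≤ _ := by simp [Set.indicator_of_notMem (Set.notMem_compl_iff.2 hx)]
    · have : 0 ≤ 2 * Real.pi * |t| * R := by positivity
      simp only [Set.indicator_of_mem (Set.mem_compl hx), Pi.one_apply]
      linarith [norm_expFun_sub_one_le_two t x]
  calc ‖ft μ t - 1‖ = ‖∫ x, (expFun t x - 1) ∂μ‖ := by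
        rw [integral_sub (integrable_expFun ..) (integrable_const 1)]
        simp [ft]
    _ ≤ ∫ x, (2 * Real.pi * |t| * R + 2 * (Metric.closedBall 0 R)ᶜ.indicator 1 x) ∂μ :=
        norm_integral_le_of_norm_le ((integrable_const _).add
          (((integrable_const 1).indicator hS).const_mul 2)) (.of_forall hbound)
    _ = _ := by
        rw [integral_add (integrable_const _) (((integrable_const 1).indicator hS).const_mul 2),
          integral_const_mul, integral_const_mul, integral_indicator_one hS]
        simp

lemma IsTightFamily.exists_measureReal_compl_closedBall_le {ι : Type*} {Φ : ι → Measure ℝ}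
    [∀ i, IsProbabilityMeasure (Φ i)] (hΦ : IsTightFamily Φ) {ε : ℝ} (hε : 0 < ε) :
    ∃ R > 0, ∀ i, (Φ i).real (Metric.closedBall 0 R)ᶜ ≤ ε := by
  obtain ⟨K, hK, hKΦ⟩ := hΦ (ENNReal.ofReal ε) (by simpa using hε)
  obtain ⟨R, hR, hKR⟩ := hK.isBounded.subset_closedBall_lt 0 0
  refine ⟨R, hR, fun i => ?_⟩
  have : (Φ i) Kᶜ ≤ ENNReal.ofReal ε := by
    rw [prob_compl_eq_one_sub hK.measurableSet, tsub_le_iff_right, add_comm]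
    exact le_tsub_add.trans (add_le_add_left (hKΦ i).le _)
  calc (Φ i).real (Metric.closedBall 0 R)ᶜ ≤ (Φ i).real Kᶜ :=
        measureReal_mono (Set.compl_subset_compl.2 hKR)
    _ ≤ ε := ENNReal.toReal_le_of_le_ofReal hε.le this

lemma IsTightFamily.exists_ft_ne_zero {ι : Type*} {Φ : ι → Measure ℝ}
    [∀ i, IsProbabilityMeasure (Φ i)] (hΦ : IsTightFamily Φ) :
    ∃ c > 0, ∀ i t, |t| ≤ c → ft (Φ i) t ≠ 0 := by
  obtain ⟨R, hR, hΦR⟩ := hΦ.exists_measureReal_compl_closedBall_le (ε := 1 / 4) (by norm_num)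
  refine ⟨1 / (8 * Real.pi * R), by positivity, fun i t ht h0 => ?_⟩
  have hsmall : 2 * Real.pi * |t| * R ≤ 1 / 4 := by
    calc 2 * Real.pi * |t| * R ≤ 2 * Real.pi * (1 / (8 * Real.pi * R)) * R := by gcongr
      _ = 1 / 4 := by field_simp; ring
  have := norm_ft_sub_one_le (Φ i) hR.le t
  rw [h0, zero_sub, norm_neg, norm_one] at this
  linarith [hΦR i]

end Tightness

section ResidueSystem

variable {B : Finset ℤ} {M : ℕ}

lemma IsCRS.sum_intCast_eq [NeZero M] {β : Type*} [AddCommMonoid β] (h : IsCRS B M)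
    (f : ZMod M → β) : ∑ b ∈ B, f b = ∑ r, f r :=
  sum_bij (fun b _ => (b : ZMod M)) (fun _ _ => mem_univ _)
    (fun _ ha _ hb hab => (h _).unique ⟨ha, rfl⟩ ⟨hb, hab.symm⟩)
    (fun r _ => let ⟨b, ⟨hb, hbr⟩, _⟩ := h r; ⟨b, hb, hbr⟩) (fun _ _ => rfl)

lemma IsCRS.card_eq [NeZero M] (h : IsCRS B M) : #B = M := by
  simpa using h.sum_intCast_eq fun _ => (1 : ℕ)

lemma IsCRS.nonempty [NeZero M] (h : IsCRS B M) : B.Nonempty :=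
  card_pos.1 (h.card_eq ▸ NeZero.pos M)

lemma untopD_min_le {b : ℤ} (hb : b ∈ B) : B.min.untopD 0 ≤ b := by
  obtain ⟨m, hm⟩ := min_of_mem hb
  rw [hm, WithTop.untopD_coe]
  exact min_le_of_eq hb hm

lemma sum_pow_val_zmod {R : Type*} [Semiring R] [NeZero M] (x : R) :
    ∑ r : ZMod M, x ^ r.val = ∑ n ∈ range M, x ^ n := by
  obtain ⟨n, rfl⟩ := Nat.exists_eq_succ_of_ne_zero (NeZero.ne M)
  exact Fin.sum_univ_eq_sum_range (fun i => x ^ i) _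

lemma IsCRS.sum_X_pow_mod_eq_geomPoly [NeZero M] (h : IsCRS B M) :
    ∑ b ∈ B, (X : ℤ[X]) ^ ((b - B.min.untopD 0).toNat % M) = geomPoly M := by
  set m := B.min.untopD 0
  calc ∑ b ∈ B, (X : ℤ[X]) ^ ((b - m).toNat % M)
      = ∑ b ∈ B, X ^ ((b : ZMod M) - m).val := sum_congr rfl fun b hb => by
        rw [← ZMod.val_natCast, ← Int.cast_natCast, Int.toNat_of_nonneg
          (sub_nonneg.2 (untopD_min_le hb)), Int.cast_sub]
    _ = ∑ r : ZMod M, X ^ (r - m).val := h.sum_intCast_eq fun r => X ^ (r - m).val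
    _ = ∑ r : ZMod M, X ^ r.val := Fintype.sum_equiv (Equiv.subRight (m : ZMod M)) _ _
        fun _ => rfl
    _ = geomPoly M := sum_pow_val_zmod X

lemma sub_one_dvd_pow_sub_pow_mod {R : Type*} [CommRing R] (x : R) (M e : ℕ) :
    x ^ M - 1 ∣ x ^ e - x ^ (e % M) := by
  have he : x ^ e - x ^ (e % M) = ((x ^ M) ^ (e / M) - 1) * x ^ (e % M) := by
    rw [sub_mul, one_mul, ← pow_mul, ← pow_add, Nat.div_add_mod]
  have hdvd : x ^ M - 1 ∣ (x ^ M) ^ (e / M) - 1 := by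
    simpa using sub_dvd_pow_sub_pow (x ^ M) 1 (e / M)
  exact he ▸ hdvd.mul_right _

lemma IsCRS.numerPoly_eq_geomPoly_mul_charPoly [NeZero M] (h : IsCRS B M) :
    numerPoly B = geomPoly M * charPoly B := by
  have hdvd : geomPoly M ∣ numerPoly B := by
    have hgeom : geomPoly M ∣ X ^ M - 1 := ⟨X - 1, (geom_sum_mul X M).symm⟩
    have hdiff : (X : ℤ[X]) ^ M - 1 ∣ numerPoly B - geomPoly M := by
      rw [← h.sum_X_pow_mod_eq_geomPoly, numerPoly, ← sum_sub_distrib]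
      exact dvd_sum fun b _ => sub_one_dvd_pow_sub_pow_mod X M _
    simpa using (hgeom.trans hdiff).add (dvd_refl (geomPoly M))
  have hmonic : (geomPoly M).Monic := monic_geom_sum_X (NeZero.ne M)
  obtain ⟨q, hq⟩ := hdvd
  rw [charPoly, h.card_eq, hq, mul_divByMonic_cancel_left _ hmonic]

lemma aeval_numerPoly {z : ℂ} (hz : z ≠ 0) :
    z ^ B.min.untopD 0 * aeval z (numerPoly B) = ∑ b ∈ B, z ^ b := by
  rw [numerPoly, map_sum, mul_sum]
  refine sum_congr rfl fun b hb => ?_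
  rw [aeval_X_pow, ← zpow_natCast, Int.toNat_of_nonneg (sub_nonneg.2 (untopD_min_le hb)),
    ← zpow_add₀ hz, add_sub_cancel]

lemma eq_intCast_div_of_expFun_pow_eq_one {η : ℝ} (hM : M ≠ 0) (h : expFun η 1 ^ M = 1) :
    ∃ a : ℤ, η = a / M := by
  rw [← zpow_natCast, ← expFun_intCast_left, expFun, Complex.exp_eq_one_iff] at h
  obtain ⟨n, hn⟩ := h
  have hre : -(2 * Real.pi * M * η) = n * (2 * Real.pi) := by
    simpa using congrArg Complex.im hn
  refine ⟨-n, ?_⟩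
  field_simp
  push_cast
  nlinarith [Real.pi_pos]

lemma IsCRS.eq_intCast_div_of_MB_eq_zero [NeZero M] (h : IsCRS B M) (hudz : SatisfiesUDZ B M)
    {η : ℝ} (hη : MB B η = 0) : ∃ a : ℤ, η = a / M := by
  set z := expFun η 1
  have hsum : ∑ b ∈ B, z ^ b = 0 := by
    simpa [MB, expFun_intCast_left, h.card_eq, NeZero.ne M] using hη
  have hnum : aeval z (numerPoly B) = 0 := by
    rw [← aeval_numerPoly (expFun_ne_zero η 1)] at hsum
    exact (mul_eq_zero.1 hsum).resolve_left (zpow_ne_zero _ (expFun_ne_zero η 1))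
  rw [h.numerPoly_eq_geomPoly_mul_charPoly, map_mul, mul_eq_zero] at hnum
  rcases hnum with hgeom | hchar
  · refine eq_intCast_div_of_expFun_pow_eq_one (NeZero.ne M) ?_
    have := geom_sum_mul z M
    simp only [geomPoly, map_sum, aeval_X_pow] at hgeom
    rw [hgeom, zero_mul] at this
    exact (sub_eq_zero.1 this.symm)
  · obtain ⟨j, -, hj⟩ := hudz hchar
    exact ⟨j, hj⟩

end ResidueSystem

lemma IsOrthoSet.ft_eq_zero {μ : Measure ℝ} {Λ : Set ℝ} (hΛ : IsOrthoSet μ Λ) (h0 : 0 ∈ Λ)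
    {l : ℝ} (hl : l ∈ Λ) (hl0 : l ≠ 0) : ft μ l = 0 := by
  simpa [ft, expFun_zero_left, hl0.symm] using hΛ 0 h0 l hl

lemma tendsto_div_prod_Icc_atTop {N : ℕ → ℕ} (hN : ∀ i ≥ 1, 2 ≤ N i) (l : ℝ) :
    Tendsto (fun k => l / ∏ j ∈ Icc 1 k, (N j : ℝ)) atTop (𝓝 0) := by
  have hpow (k : ℕ) : (2 : ℝ) ^ k ≤ ∏ j ∈ Icc 1 k, (N j : ℝ) := by
    have := pow_card_le_prod (Icc 1 k) N 2 fun j hj => hN j (mem_Icc.1 hj).1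
    exact_mod_cast (by simpa using this)
  exact tendsto_const_nhds.div_atTop
    (tendsto_atTop_mono hpow (tendsto_pow_atTop_atTop_of_one_lt one_lt_two))

lemma exists_rat_eq_of_div_natCast_eq {l : ℝ} {p m : ℕ} {a : ℤ} (hp : p ≠ 0)
    (h : l / p = a / m) : ∃ q : ℚ, l = q := by
  rw [div_eq_iff (by positivity)] at h
  exact ⟨a / m * p, by rw [h]; push_cast; ring⟩

theorem stmt12
    (N M : ℕ → ℕ) (B : ℕ → Finset ℤ) (μ : Measure ℝ) (ν : ℕ → Measure ℝ)
    (hM : ∀ k ≥ 1, 2 ≤ M k) (hMN : ∀ k ≥ 1, M k ≤ N k)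
    (hCRS : ∀ k ≥ 1, IsCRS (B k) (M k))
    (hUDZ : ∀ k ≥ 1, SatisfiesUDZ (B k) (M k))
    (hμ : IsInfiniteConv N B μ)
    (hν : ∀ k ≥ 1, IsNuGt N B k (ν k))
    (htight : IsTightFamily fun k => ν (k + 1))
    (Λ : Set ℝ) (hΛ : IsSpectralPair μ Λ) (h0 : (0 : ℝ) ∈ Λ) :
    ∀ l ∈ Λ, ∃ q : ℚ, l = (q : ℝ) := by
  intro l hl
  rcases eq_or_ne l 0 with rfl | hl0
  · exact ⟨0, by simp⟩
  have hM0 i (hi : i ≥ 1) : NeZero (M i) := NeZero.of_pos (by linarith [hM i hi])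
  have hN i (hi : i ≥ 1) : 2 ≤ N i := (hM i hi).trans (hMN i hi)
  have hB i (hi : i ≥ 1) : (B i).Nonempty := have := hM0 i hi; (hCRS i hi).nonempty
  have (k : ℕ) : IsProbabilityMeasure (ν (k + 1)) := (hν (k + 1) k.succ_pos).1
  obtain ⟨c, hc, hνc⟩ := htight.exists_ft_ne_zero
  obtain ⟨k, hk⟩ := (((tendsto_div_prod_Icc_atTop hN l).comp
    (tendsto_add_atTop_nat 1)).eventually (Metric.closedBall_mem_nhds 0 hc)).exists
  have hfactor := ft_eq_prod_MB_mul_ft_of_isNuGt hB (fun i hi => by linarith [hN i hi]) hμ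
    (hν (k + 1) k.succ_pos) l
  rw [hΛ.1.ft_eq_zero h0 hl hl0, eq_comm, mul_eq_zero] at hfactor
  have htail : ft (ν (k + 1)) (l / ∏ j ∈ Icc 1 (k + 1), (N j : ℝ)) ≠ 0 :=
    hνc k _ (by simpa [abs_div, abs_prod] using hk)
  obtain ⟨i, hi, hMB⟩ := prod_eq_zero_iff.1 (hfactor.resolve_right htail)
  have hi1 := (mem_Icc.1 hi).1
  have := hM0 i hi1
  obtain ⟨a, ha⟩ := (hCRS i hi1).eq_intCast_div_of_MB_eq_zero (hUDZ i hi1) hMB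
  refine exists_rat_eq_of_div_natCast_eq (p := ∏ j ∈ Icc 1 i, N j) ?_ (by push_cast; exact ha)
  exact prod_ne_zero_iff.2 fun j hj => by linarith [hN j (mem_Icc.1 hj).1]
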